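/- arXiv:1705.04408 — 3 statements merged into one kernel-verified Lean document; each statement's English description precedes it below -/
import Mathlib

section
/- Let ρ < 0 and let W : (0,∞) → (0,∞) be regularly varying at infinity with index ρ-1 and integrable on [1,∞). Then ∫ₓ^∞ W(u) du ∼ (1/|ρ|) x W(x) as x → ∞. -/
/-!
Writing `∫ₓ^∞ W = x ∫₁^∞ W(tx) dt`, the claim is that
`∫₁^∞ W(tx)/W(x) dt → ∫₁^∞ t^(ρ-1) dt = 1/|ρ|`, which follows by dominated convergence once
`W(tx)/W(x)` is dominated by an integrable power of `t` (a Potter bound).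
The Potter bound comes from the uniform convergence theorem for the additive form
`h(s) = log W(eˢ)`: if `h(s + v) - h(s) → c v` for every `v` and `h` is measurable near infinity,
the convergence is uniform in `v ∈ [0, 1]`. Indeed, for large `s`
the sets of good `y ∈ [b, b + 2]` (for `b = s` and `b = s + u`) have measure `> 3/2` and lie in
`[s, s + 3]`, so they meet, and a common point controls `h(s + u) - h(s)`.
-/

open Filter Set MeasureTheory Real Topology

open scoped ENNReal

theorem eventually_lt_measure_of_forall_eventually_mem {α ι : Type*} [MeasurableSpace α]
    {μ : Measure α} [Preorder ι] [IsDirectedOrder ι] [Nonempty ι]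
    [(atTop : Filter ι).IsCountablyGenerated] {A : ι → Set α} {S : Set α}
    (hS : ∀ x ∈ S, ∀ᶠ i in atTop, x ∈ A i) {θ : ℝ≥0∞} (hθ : θ < μ S) :
    ∀ᶠ i in atTop, θ < μ (A i) := by
  set E : ι → Set α := fun i => ⋂ (j) (_ : i ≤ j), A j
  have hE : Monotone E := fun i i' hii' x hx =>
    mem_iInter₂.2 fun j hj => mem_iInter₂.1 hx j (hii'.trans hj)
  have hSE : S ⊆ ⋃ i, E i := fun x hx => by
    obtain ⟨i, hi⟩ := eventually_atTop.1 (hS x hx)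
    exact mem_iUnion.2 ⟨i, mem_iInter₂.2 hi⟩
  filter_upwards [(tendsto_measure_iUnion_atTop hE).eventually
    (eventually_gt_nhds (hθ.trans_le (measure_mono hSE)))] with i hi
  exact hi.trans_le (measure_mono (biInter_subset_of_mem le_rfl))

theorem nonempty_inter_of_measure_lt_add₀ {α : Type*} [MeasurableSpace α] (μ : Measure α)
    {s t u : Set α} (ht : NullMeasurableSet t μ) (h's : s ⊆ u) (h't : t ⊆ u)
    (h : μ u < μ s + μ t) : (s ∩ t).Nonempty := by
  obtain ⟨t', ht't, ht', htt'⟩ := ht.exists_measurable_subset_ae_eq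
  rw [← measure_congr htt'] at h
  exact (nonempty_inter_of_measure_lt_add μ ht' h's (ht't.trans h't) h).mono
    (inter_subset_inter_right s ht't)

theorem tendstoUniformlyOn_sub_of_tendsto_sub {h : ℝ → ℝ} {a c : ℝ}
    (hmeas : AEMeasurable h (volume.restrict (Ioi a)))
    (hlim : ∀ v, Tendsto (fun s => h (s + v) - h s) atTop (𝓝 (c * v))) :
    TendstoUniformlyOn (fun s u => h (s + u) - h s) (fun u => c * u) atTop (Icc 0 1) := by
  rw [Metric.tendstoUniformlyOn_iff]
  intro ε hε
  set G : ℝ → Set ℝ := fun b => Icc b (b + 2) ∩ {y | |h y - h b - c * (y - b)| < ε / 2}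
  have hG_meas : ∀ b > a, NullMeasurableSet (G b) volume := by
    intro b hb
    have hGa : G b ⊆ Ioi a := fun y hy => hb.trans_le hy.1.1
    refine (nullMeasurableSet_restrict_of_subset hGa).1 ?_
    have hf : AEMeasurable (fun y => |h y - h b - c * (y - b)|) (volume.restrict (Ioi a)) := by
      fun_prop
    exact measurableSet_Icc.nullMeasurableSet.inter (hf.nullMeasurable measurableSet_Iio)
  have hG_vol : ∀ᶠ b in atTop, ENNReal.ofReal (3 / 2) < volume (G b) := by
    have hshift :
        ∀ᶠ b in atTop, ENNReal.ofReal (3 / 2) < volume ((fun v => b + v) ⁻¹' G b) := by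
      refine eventually_lt_measure_of_forall_eventually_mem (S := Icc 0 2) (fun v hv => ?_) ?_
      · filter_upwards [(hlim v).eventually (Metric.ball_mem_nhds _ (half_pos hε))] with b hb
        refine ⟨⟨by linarith [hv.1], by linarith [hv.2]⟩, ?_⟩
        rw [Real.dist_eq] at hb
        change |h (b + v) - h b - c * (b + v - b)| < ε / 2
        rwa [add_sub_cancel_left]
      · rw [Real.volume_Icc]
        exact ENNReal.ofReal_lt_ofReal_iff'.2 ⟨by norm_num, by norm_num⟩
    simpa only [measure_preimage_add] using hshift
  obtain ⟨S, hS⟩ := eventually_atTop.1 hG_vol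
  filter_upwards [eventually_ge_atTop S, eventually_gt_atTop a] with s hsS hsa u hu
  obtain ⟨y, ⟨-, hy₁⟩, ⟨-, hy₂⟩⟩ : (G s ∩ G (s + u)).Nonempty := by
    refine nonempty_inter_of_measure_lt_add₀ volume (hG_meas _ (by linarith [hu.1]))
      (u := Icc s (s + 3)) (fun y hy => ⟨hy.1.1, by linarith [hy.1.2]⟩)
      (fun y hy => ⟨by linarith [hy.1.1, hu.1], by linarith [hy.1.2, hu.2]⟩) ?_
    calc volume (Icc s (s + 3)) = ENNReal.ofReal (3 / 2) + ENNReal.ofReal (3 / 2) := by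
          rw [Real.volume_Icc, ← ENNReal.ofReal_add (by norm_num) (by norm_num)]; norm_num
      _ < volume (G s) + volume (G (s + u)) :=
          ENNReal.add_lt_add (hS s hsS) (hS _ (by linarith [hu.1]))
  change |h y - h s - c * (y - s)| < ε / 2 at hy₁
  change |h y - h (s + u) - c * (y - (s + u))| < ε / 2 at hy₂
  rw [Real.dist_eq, abs_sub_comm]
  calc |h (s + u) - h s - c * u|
      = |(h y - h s - c * (y - s)) - (h y - h (s + u) - c * (y - (s + u)))| := by ring_nf
    _ ≤ |h y - h s - c * (y - s)| + |h y - h (s + u) - c * (y - (s + u))| := abs_sub _ _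
    _ < ε := by linarith

theorem sub_le_mul_add_of_forall_mem_Icc_zero_one {g : ℝ → ℝ} {S k δ : ℝ} (hδ : 0 ≤ δ)
    (hg : ∀ s ≥ S, ∀ u ∈ Icc (0 : ℝ) 1, g (s + u) - g s ≤ k * u + δ) :
    ∀ s ≥ S, ∀ u ≥ 0, g (s + u) - g s ≤ (k + δ) * u + δ := by
  have hunit : ∀ s ≥ S, ∀ u ∈ Icc (0 : ℝ) 1, g (s + u) - g s ≤ (k + δ) * u + δ :=
    fun s hs u hu => by nlinarith [hg s hs u hu, hu.1]
  have hnat : ∀ n : ℕ, ∀ s ≥ S, ∀ u ∈ Icc (0 : ℝ) (n + 1),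
      g (s + u) - g s ≤ (k + δ) * u + δ := by
    intro n
    induction n with
    | zero => simpa using hunit
    | succ n ih =>
      intro s hs u hu
      rcases le_or_gt u 1 with hu1 | hu1
      · exact hunit s hs u ⟨hu.1, hu1⟩
      have hfirst := hg s hs 1 ⟨zero_le_one, le_rfl⟩
      have hrest := ih (s + 1) (by linarith) (u - 1)
        ⟨by linarith, by push_cast at hu ⊢; linarith [hu.2]⟩
      rw [show s + 1 + (u - 1) = s + u by ring] at hrest
      linarith
  intro s hs u hu
  exact hnat ⌈u⌉₊ s hs u ⟨hu, by linarith [Nat.le_ceil u]⟩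

section RegularVariation

variable {W : ℝ → ℝ} {α : ℝ}

theorem tendsto_log_comp_exp_add_sub (hWpos : ∀ x > 0, 0 < W x)
    (hWrv : ∀ l > 0, Tendsto (fun x => W (l * x) / W x) atTop (𝓝 (l ^ α))) (v : ℝ) :
    Tendsto (fun s => log (W (exp (s + v))) - log (W (exp s))) atTop (𝓝 (α * v)) := by
  have hlim := ((continuousAt_log (rpow_pos_of_pos (exp_pos v) α).ne').tendsto.comp
    ((hWrv _ (exp_pos v)).comp tendsto_exp_atTop))
  rw [log_rpow (exp_pos v), log_exp] at hlim
  refine hlim.congr fun s => ?_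
  simp only [Function.comp_apply, ← exp_add, add_comm v s]
  exact log_div (hWpos _ (exp_pos _)).ne' (hWpos _ (exp_pos _)).ne'

theorem aemeasurable_log_comp_exp (hW : IntegrableOn W (Ioi 1)) :
    AEMeasurable (fun s => log (W (exp s))) (volume.restrict (Ioi 0)) := by
  have himage : exp '' Ioi 0 = Ioi 1 := by
    rw [image_exp_Ioi, exp_zero]
  rw [← himage, integrableOn_image_iff_integrableOn_abs_deriv_smul measurableSet_Ioi
    (fun s _ => (hasDerivAt_exp s).hasDerivWithinAt) exp_injective.injOn] at hW
  have hcomp :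
      AEMeasurable (fun s => exp (-s) * (|exp s| • W (exp s))) (volume.restrict (Ioi 0)) :=
    (measurable_exp.comp measurable_neg).aemeasurable.mul hW.aestronglyMeasurable.aemeasurable
  refine measurable_log.comp_aemeasurable (hcomp.congr (ae_of_all _ fun s => ?_))
  simp [abs_of_pos (exp_pos s), ← mul_assoc, ← exp_add]

theorem eventually_le_exp_mul_rpow_mul (hWpos : ∀ x > 0, 0 < W x)
    (hWrv : ∀ l > 0, Tendsto (fun x => W (l * x) / W x) atTop (𝓝 (l ^ α)))
    (hW : IntegrableOn W (Ioi 1)) {δ : ℝ} (hδ : 0 < δ) :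
    ∀ᶠ x in atTop, ∀ t ≥ 1, W (t * x) ≤ exp δ * t ^ (α + δ) * W x := by
  set g : ℝ → ℝ := fun s => log (W (exp s))
  obtain ⟨S, hS⟩ := eventually_atTop.1 (Metric.tendstoUniformlyOn_iff.1
    (tendstoUniformlyOn_sub_of_tendsto_sub (aemeasurable_log_comp_exp hW)
      (tendsto_log_comp_exp_add_sub hWpos hWrv)) δ hδ)
  have hgrowth := sub_le_mul_add_of_forall_mem_Icc_zero_one (g := g) hδ.le fun s hs u hu => by
    have := hS s hs u hu
    rw [Real.dist_eq, abs_lt] at this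
    linarith
  filter_upwards [eventually_ge_atTop (exp S)] with x hx t ht
  have hx0 : 0 < x := (exp_pos S).trans_le hx
  have ht0 : 0 < t := one_pos.trans_le ht
  have hlog := hgrowth (log x) ((le_log_iff_exp_le hx0).2 hx) (log t) (log_nonneg ht)
  rw [← log_mul hx0.ne' ht0.ne', mul_comm x t] at hlog
  simp only [g, exp_log hx0, exp_log (mul_pos ht0 hx0)] at hlog
  rw [← exp_log (hWpos _ (mul_pos ht0 hx0)), ← exp_log (hWpos _ hx0), rpow_def_of_pos ht0,
    ← exp_add, ← exp_add]
  exact exp_le_exp.2 (by linarith)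

theorem tendsto_integral_Ioi_one_comp_mul_div (hα : α < -1) (hWpos : ∀ x > 0, 0 < W x)
    (hWrv : ∀ l > 0, Tendsto (fun x => W (l * x) / W x) atTop (𝓝 (l ^ α)))
    (hW : IntegrableOn W (Ioi 1)) :
    Tendsto (fun x => ∫ t in Ioi 1, W (t * x) / W x) atTop (𝓝 (-1 / (α + 1))) := by
  set δ := -(α + 1) / 2
  have hδ : 0 < δ := by simp only [δ]; linarith
  have hbound : α + δ < -1 := by simp only [δ]; linarith
  have hlimit : ∫ t in Ioi (1 : ℝ), t ^ α = -1 / (α + 1) := by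
    rw [integral_Ioi_rpow_of_lt hα one_pos, Real.one_rpow]
  rw [← hlimit]
  refine tendsto_integral_filter_of_dominated_convergence (fun t => exp δ * t ^ (α + δ)) ?_ ?_
    ((integrableOn_Ioi_rpow_of_lt hbound one_pos).const_mul _) ?_
  · filter_upwards [eventually_ge_atTop 1] with x hx
    have hWx : IntegrableOn (fun t => W (t * x)) (Ioi 1) :=
      (integrableOn_Ioi_comp_mul_right_iff W 1 (one_pos.trans_le hx)).2
        (hW.mono_set (Ioi_subset_Ioi (by linarith)))
    exact (hWx.div_const (W x)).aestronglyMeasurable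
  · filter_upwards [eventually_le_exp_mul_rpow_mul hWpos hWrv hW hδ,
      eventually_gt_atTop 0] with x hx hx0
    refine (ae_restrict_iff' measurableSet_Ioi).2 (ae_of_all _ fun t ht => ?_)
    have hWx := hWpos x hx0
    rw [norm_of_nonneg (div_pos (hWpos _ (mul_pos (one_pos.trans ht) hx0)) hWx).le,
      div_le_iff₀ hWx]
    exact hx t (le_of_lt ht)
  · exact (ae_restrict_iff' measurableSet_Ioi).2
      (ae_of_all _ fun t ht => hWrv t (one_pos.trans ht))

end RegularVariation

/-- for ρ < 0 and W regularly varying at infinity with index ρ-1,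
∫ₓ^∞ W(u) du ∼ (1/|ρ|) x W(x) as x → ∞. -/
theorem stmt2
    (ρ : ℝ) (hρ : ρ < 0)
    (W : ℝ → ℝ) (hWpos : ∀ x > 0, 0 < W x)
    (hWrv : ∀ l > 0,
      Tendsto (fun x => W (l * x) / W x) atTop (nhds (l ^ (ρ - 1))))
    (hWint : IntegrableOn W (Set.Ici 1) MeasureTheory.volume) :
    Tendsto (fun x => (∫ u in Set.Ioi x, W u) / ((1 / |ρ|) * x * W x))
      atTop (nhds 1) := by
  have hlim := (tendsto_integral_Ioi_one_comp_mul_div (by linarith) hWpos hWrv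
    (hWint.mono_set Ioi_subset_Ici_self)).const_mul |ρ|
  rw [sub_add_cancel, abs_of_neg hρ, neg_div, neg_mul_neg, mul_one_div_cancel hρ.ne] at hlim
  refine hlim.congr' ?_
  filter_upwards [eventually_gt_atTop 0] with x hx
  have hsubst : ∫ u in Ioi x, W u = x * ∫ t in Ioi 1, W (t * x) := by
    simpa using (integral_comp_mul_right_Ioi' W 1 hx).symm
  have hWx := (hWpos x hx).ne'
  rw [hsubst, integral_div, abs_of_neg hρ]
  generalize ∫ t in Ioi 1, W (t * x) = I
  field_simp
end

section
/- Let h* : (0,∞) → (0,∞) be differentiable with h*(s) → m_∞ ∈ (0,∞) as s → 0⁺, and let m : (0,∞) → (0,∞) be increasing, differentiable, with m(x) → m_∞ as x → ∞. Suppose -(h*)'(s) ∼ -(d/ds) m(1/√s) as s → 0⁺. Then 1/h*(s) - 1/m_∞ ∼ (1/m_∞²)(m_∞ - m(1/√s)) as s → 0⁺. -/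
/-!
With `f = m∞ - h*` and `g = m∞ - m(1/√·)`, both tend to `0` at `0⁺` and `f'/g' → 1`, so
de l'Hospital's rule gives `f/g → 1`. Since
`(1/h* - 1/m∞) / ((1/m∞²)(m∞ - m(1/√s))) = (f/g)(s) · m∞/h*(s)` and `h* → m∞`,
the claimed ratio tends to `1` as well.
-/

open Filter Set Topology

theorem deriv.lhopital_zero_nhdsGT_of_ne_zero {f g : ℝ → ℝ} {a l : ℝ} (hl : l ≠ 0)
    (hfa : Tendsto f (𝓝[>] a) (𝓝 0)) (hga : Tendsto g (𝓝[>] a) (𝓝 0))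
    (hdiv : Tendsto (fun x => deriv f x / deriv g x) (𝓝[>] a) (𝓝 l)) :
    Tendsto (fun x => f x / g x) (𝓝[>] a) (𝓝 l) := by
  -- a nonzero derivative makes `f` differentiable and is what Mathlib's rule asks of `g`
  have hne : ∀ᶠ x in 𝓝[>] a, deriv f x / deriv g x ≠ 0 := hdiv.eventually_ne hl
  refine deriv.lhopital_zero_nhdsGT ?_ ?_ hfa hga hdiv
  · filter_upwards [hne] with x hx
    exact differentiableAt_of_deriv_ne_zero (div_ne_zero_iff.1 hx).1
  · filter_upwards [hne] with x hx
    exact (div_ne_zero_iff.1 hx).2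

theorem tendsto_one_div_sqrt_nhdsGT_zero :
    Tendsto (fun s : ℝ => 1 / Real.sqrt s) (𝓝[>] 0) atTop := by
  have hsqrt : Tendsto Real.sqrt (𝓝[>] 0) (𝓝[>] 0) :=
    tendsto_nhdsWithin_of_tendsto_nhds_of_eventually_within _
      ((Real.continuous_sqrt.tendsto' 0 0 Real.sqrt_zero).mono_left nhdsWithin_le_nhds)
      (eventually_nhdsWithin_of_forall fun _ hs => Real.sqrt_pos.2 hs)
  simp only [one_div]
  exact tendsto_inv_nhdsGT_zero.comp hsqrt

theorem one_div_sub_one_div_div_eq {u c : ℝ} (hu : u ≠ 0) (hc : c ≠ 0) (d : ℝ) :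
    (1 / u - 1 / c) / (1 / c ^ 2 * d) = (c - u) / d * (c / u) := by
  rcases eq_or_ne d 0 with rfl | hd
  · simp
  · field_simp

theorem stmt9_general
    (hstar m : ℝ → ℝ) (minf : ℝ) (hminf : 0 < minf)
    (hstarlim : Tendsto hstar (nhdsWithin 0 (Set.Ioi 0)) (nhds minf))
    (hmlim : Tendsto m atTop (nhds minf))
    (hderiv : Tendsto
      (fun s => (-(deriv hstar s)) /
        (-(deriv (fun s => m (1 / Real.sqrt s)) s)))
      (nhdsWithin 0 (Set.Ioi 0)) (nhds 1)) :
    Tendsto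
      (fun s => (1 / hstar s - 1 / minf) /
        ((1 / minf ^ 2) * (minf - m (1 / Real.sqrt s))))
      (nhdsWithin 0 (Set.Ioi 0)) (nhds 1) := by
  have hmsqrt : Tendsto (fun s => m (1 / Real.sqrt s)) (𝓝[>] 0) (𝓝 minf) :=
    hmlim.comp tendsto_one_div_sqrt_nhdsGT_zero
  have hquot : Tendsto (fun s => (minf - hstar s) / (minf - m (1 / Real.sqrt s)))
      (𝓝[>] 0) (𝓝 1) :=
    deriv.lhopital_zero_nhdsGT_of_ne_zero one_ne_zero
      (by simpa using hstarlim.const_sub minf) (by simpa using hmsqrt.const_sub minf)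
      (by simpa only [deriv_const_sub] using hderiv)
  have hratio : Tendsto (fun s => minf / hstar s) (𝓝[>] 0) (𝓝 1) := by
    rw [← div_self hminf.ne']
    exact tendsto_const_nhds.div hstarlim hminf.ne'
  have hstar_ne : ∀ᶠ s in 𝓝[>] 0, hstar s ≠ 0 := hstarlim.eventually_ne hminf.ne'
  refine (mul_one (1 : ℝ) ▸ hquot.mul hratio).congr' ?_
  filter_upwards [hstar_ne] with s hs
  exact (one_div_sub_one_div_div_eq hs hminf.ne' _).symm

/-- the de l'Hospital computation in the proof of Theorem 4. -/
theorem stmt9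
    (hstar m : ℝ → ℝ) (minf : ℝ) (hminf : 0 < minf)
    (hstarpos : ∀ s > 0, 0 < hstar s)
    (hmpos : ∀ x > 0, 0 < m x)
    (hstardiff : Differentiable ℝ hstar)
    (hmdiff : Differentiable ℝ m)
    (hmincr : StrictMono m)
    (hstarlim : Tendsto hstar (nhdsWithin 0 (Set.Ioi 0)) (nhds minf))
    (hmlim : Tendsto m atTop (nhds minf))
    (hderiv : Tendsto
      (fun s => (-(deriv hstar s)) /
        (-(deriv (fun s => m (1 / Real.sqrt s)) s)))
      (nhdsWithin 0 (Set.Ioi 0)) (nhds 1)) :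
    Tendsto
      (fun s => (1 / hstar s - 1 / minf) /
        ((1 / minf ^ 2) * (minf - m (1 / Real.sqrt s))))
      (nhdsWithin 0 (Set.Ioi 0)) (nhds 1) :=
  stmt9_general hstar m minf hminf hstarlim hmlim hderiv
end

section
/- (Example 2 asymptotics) Let 0 < β < 1, α ≠ 0, and for x > 1 let W(x) = exp(∫₁ˣ (-1/u + α/(u (log u)^β)) du) = (1/x) exp(α (log x)^{1-β}/(1-β)). Then m(x) = 2∫₁ˣ W(u) du + C satisfies: if α > 0, m(x) ∼ (2/α)(log x)^β exp(α(log x)^{1-β}/(1-β)) as x → ∞; in particular 1/m(√t) ∼ (α/2)(log √t)^{-β} exp(-α(log √t)^{1-β}/(1-β)) as t → ∞. -/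
/-!
With `E x = exp (α (log x)^(1-β) / (1-β))`, the comparison function `G x = (2/α) (log x)^β E x`
has derivative `(2/α) W x (α + β (log x)^(β-1))`, so `m' / G' → 1` while `G → ∞`.
L'Hôpital's rule in the `∞/∞` form, which follows from the monotonicity of `m - c G` on a tail
where `m' ≤ c G'`, gives `m ∼ G`; the second claim is the first one at `√t`, inverted.
-/

open Filter Set Topology

section LHopital

variable {F G f g : ℝ → ℝ}

theorem eventually_div_lt_of_hasDerivAt_le {c c' : ℝ}
    (hF : ∀ᶠ x in atTop, HasDerivAt F (f x) x) (hG : ∀ᶠ x in atTop, HasDerivAt G (g x) x)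
    (hfg : ∀ᶠ x in atTop, f x ≤ c * g x) (hGtop : Tendsto G atTop atTop) (hc : c < c') :
    ∀ᶠ x in atTop, F x / G x < c' := by
  obtain ⟨x₀, hx₀⟩ := (hF.and (hG.and hfg)).exists_forall_of_atTop
  have hderiv : ∀ x ∈ Ici x₀, HasDerivAt (fun y => F y - c * G y) (f x - c * g x) x :=
    fun x hx => (hx₀ x hx).1.sub ((hx₀ x hx).2.1.const_mul c)
  have hanti : AntitoneOn (fun y => F y - c * G y) (Ici x₀) := by
    refine antitoneOn_of_hasDerivWithinAt_nonpos (f' := fun x => f x - c * g x) (convex_Ici x₀)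
      (fun x hx => (hderiv x hx).continuousAt.continuousWithinAt) (fun x hx => ?_) (fun x hx => ?_)
    · exact (hderiv x (interior_subset hx)).hasDerivWithinAt
    · linarith [(hx₀ x (interior_subset hx)).2.2]
  set K := F x₀ - c * G x₀
  have hbound : Tendsto (fun x => c + K / G x) atTop (𝓝 c) := by
    simpa using tendsto_const_nhds.add (tendsto_const_nhds.div_atTop hGtop)
  filter_upwards [hbound.eventually_lt_const hc, eventually_ge_atTop x₀,
    hGtop.eventually_gt_atTop 0] with x hlt hx hGx
  calc F x / G x ≤ c + K / G x := by
        rw [div_le_iff₀ hGx, add_mul, div_mul_cancel₀ _ hGx.ne']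
        linarith [hanti self_mem_Ici hx hx]
    _ < c' := hlt

theorem lhopital_atTop_of_tendsto_atTop {l : ℝ}
    (hF : ∀ᶠ x in atTop, HasDerivAt F (f x) x) (hG : ∀ᶠ x in atTop, HasDerivAt G (g x) x)
    (hg : ∀ᶠ x in atTop, 0 < g x) (hGtop : Tendsto G atTop atTop)
    (hfg : Tendsto (fun x => f x / g x) atTop (𝓝 l)) :
    Tendsto (fun x => F x / G x) atTop (𝓝 l) := by
  rw [tendsto_order]
  constructor
  · intro l' hl'
    obtain ⟨c, hl'c, hcl⟩ := exists_between hl'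
    have hle : ∀ᶠ x in atTop, -f x ≤ -c * g x := by
      filter_upwards [hfg.eventually_const_lt hcl, hg] with x hx hgx
      rw [lt_div_iff₀ hgx] at hx
      linarith
    filter_upwards [eventually_div_lt_of_hasDerivAt_le (hF.mono fun x => HasDerivAt.neg) hG hle
      hGtop (neg_lt_neg hl'c)] with x hx
    rw [Pi.neg_apply, neg_div] at hx
    linarith
  · intro l' hl'
    obtain ⟨c, hlc, hcl'⟩ := exists_between hl'
    have hle : ∀ᶠ x in atTop, f x ≤ c * g x := by
      filter_upwards [hfg.eventually_lt_const hlc, hg] with x hx hgx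
      rw [div_lt_iff₀ hgx] at hx
      exact hx.le
    exact eventually_div_lt_of_hasDerivAt_le hF hG hle hGtop hcl'

end LHopital

theorem hasDerivAt_integral_of_eqOn {f g : ℝ → ℝ} {a x : ℝ} (hg : ContinuousOn g (Ici a))
    (hfg : EqOn f g (Ioi a)) (hx : a < x) :
    HasDerivAt (fun y => ∫ u in a..y, f u) (f x) x := by
  have hf : ContinuousOn f (Ioi a) := (hg.mono Ioi_subset_Ici_self).congr hfg
  refine intervalIntegral.integral_hasDerivAt_right ?_
    (hf.stronglyMeasurableAtFilter isOpen_Ioi x hx) (hf.continuousAt (Ioi_mem_nhds hx))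
  refine IntervalIntegrable.congr (fun u hu => ?_)
    ((hg.mono Icc_subset_Ici_self).intervalIntegrable_of_Icc hx.le)
  rw [uIoc_of_le hx.le] at hu
  exact (hfg hu.1).symm

theorem continuousOn_inv_mul_exp_log_rpow (α : ℝ) {β : ℝ} (hβ : β ≤ 1) :
    ContinuousOn (fun x => 1 / x * Real.exp (α * Real.log x ^ (1 - β) / (1 - β))) (Ici 1) := by
  have hpos : ∀ x ∈ Ici (1 : ℝ), x ≠ 0 := fun x (hx : 1 ≤ x) => by positivity
  refine (continuousOn_const.div continuousOn_id hpos).mul ?_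
  exact ((((Real.continuous_rpow_const (sub_nonneg.mpr hβ)).comp_continuousOn
    (Real.continuousOn_log.mono fun x hx => hpos x hx)).const_smul α).div_const _).rexp

theorem hasDerivAt_log_rpow_mul_exp {α β x : ℝ} (hβ : β ≠ 1) (hx : 1 < x) :
    HasDerivAt (fun y => Real.log y ^ β * Real.exp (α * Real.log y ^ (1 - β) / (1 - β)))
      (1 / x * Real.exp (α * Real.log x ^ (1 - β) / (1 - β)) *
        (α + β * Real.log x ^ (β - 1))) x := by
  have hL : 0 < Real.log x := Real.log_pos hx
  have hlog := Real.hasDerivAt_log (by positivity : x ≠ 0)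
  have hpow := hlog.rpow_const (p := β) (Or.inl hL.ne')
  have hexp := (((hlog.rpow_const (p := 1 - β) (Or.inl hL.ne')).const_mul α).div_const (1 - β)).exp
  refine (hpow.mul hexp).congr_deriv ?_
  have h1β : 1 - β ≠ 0 := sub_ne_zero.mpr hβ.symm
  have hLβ : Real.log x ^ β ≠ 0 := (Real.rpow_pos_of_pos hL β).ne'
  rw [show 1 - β - 1 = -β by ring, Real.rpow_neg hL.le]
  field_simp
  ring

theorem tendsto_log_rpow_mul_exp_atTop {α β : ℝ} (hα : 0 < α) (hβ0 : 0 < β) (hβ1 : β < 1) :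
    Tendsto (fun x => Real.log x ^ β * Real.exp (α * Real.log x ^ (1 - β) / (1 - β)))
      atTop atTop := by
  have hpow : ∀ {p : ℝ}, 0 < p → Tendsto (fun x => Real.log x ^ p) atTop atTop :=
    fun hp => (tendsto_rpow_atTop hp).comp Real.tendsto_log_atTop
  have hexp : Tendsto (fun x => Real.exp (α * Real.log x ^ (1 - β) / (1 - β))) atTop atTop := by
    refine Real.tendsto_exp_atTop.comp ?_
    simpa only [mul_div_right_comm] using
      (hpow (sub_pos.mpr hβ1)).const_mul_atTop (div_pos hα (sub_pos.mpr hβ1))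
  exact (hpow hβ0).atTop_mul_atTop₀ hexp

theorem tendsto_div_add_mul_log_rpow {α β : ℝ} (hα : α ≠ 0) (hβ1 : β < 1) :
    Tendsto (fun x => α / (α + β * Real.log x ^ (β - 1))) atTop (𝓝 1) := by
  have hsmall : Tendsto (fun x => Real.log x ^ (β - 1)) atTop (𝓝 0) :=
    ((tendsto_rpow_neg_atTop (sub_pos.mpr hβ1)).comp Real.tendsto_log_atTop).congr
      fun x => by rw [Function.comp_apply, neg_sub]
  have := (tendsto_const_nhds (x := α)).div (tendsto_const_nhds.add (hsmall.const_mul β))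
    (by simpa using hα)
  rwa [mul_zero, add_zero, div_self hα] at this

theorem div_mul_rpow_neg_mul_exp_neg {L : ℝ} (hL : 0 ≤ L) (α β : ℝ) :
    α / 2 * L ^ (-β) * Real.exp (-(α * L ^ (1 - β) / (1 - β))) =
      (2 / α * L ^ β * Real.exp (α * L ^ (1 - β) / (1 - β)))⁻¹ := by
  rw [Real.rpow_neg hL, Real.exp_neg, mul_inv, mul_inv, inv_div]

theorem tendsto_div_log_rpow_mul_exp_of_integral {α β C : ℝ} {W m : ℝ → ℝ} (hα : 0 < α)
    (hβ0 : 0 < β) (hβ1 : β < 1)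
    (hW : ∀ x > 1, W x = 1 / x * Real.exp (α * Real.log x ^ (1 - β) / (1 - β)))
    (hm : ∀ x, m x = 2 * (∫ u in (1:ℝ)..x, W u) + C) :
    Tendsto (fun x => m x /
      (2 / α * Real.log x ^ β * Real.exp (α * Real.log x ^ (1 - β) / (1 - β)))) atTop (𝓝 1) := by
  set E : ℝ → ℝ := fun x => Real.exp (α * Real.log x ^ (1 - β) / (1 - β))
  have hm' : ∀ᶠ x in atTop, HasDerivAt m (2 * W x) x := by
    filter_upwards [eventually_gt_atTop 1] with x hx
    rw [funext hm]
    exact ((hasDerivAt_integral_of_eqOn (continuousOn_inv_mul_exp_log_rpow α hβ1.le)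
      hW hx).const_mul 2).add_const C
  have hG' : ∀ᶠ x in atTop, HasDerivAt (fun x => 2 / α * Real.log x ^ β * E x)
      (2 / α * (W x * (α + β * Real.log x ^ (β - 1)))) x := by
    filter_upwards [eventually_gt_atTop 1] with x hx
    rw [hW x hx]
    simpa only [mul_assoc] using (hasDerivAt_log_rpow_mul_exp (α := α) hβ1.ne hx).const_mul (2 / α)
  have hderiv_pos : ∀ᶠ x in atTop, 0 < W x ∧ 0 < α + β * Real.log x ^ (β - 1) := by
    filter_upwards [eventually_gt_atTop 1] with x hx
    have hx0 : 0 < x := by linarith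
    have hL := Real.rpow_pos_of_pos (Real.log_pos hx) (β - 1)
    rw [hW x hx]
    constructor <;> positivity
  have hratio : Tendsto (fun x => 2 * W x / (2 / α * (W x * (α + β * Real.log x ^ (β - 1)))))
      atTop (𝓝 1) := by
    refine (tendsto_div_add_mul_log_rpow hα.ne' hβ1).congr' ?_
    filter_upwards [hderiv_pos] with x ⟨hWx, hsum⟩
    field_simp
  have hGtop : Tendsto (fun x => 2 / α * Real.log x ^ β * E x) atTop atTop := by
    simpa only [mul_assoc] using
      (tendsto_log_rpow_mul_exp_atTop hα hβ0 hβ1).const_mul_atTop (by positivity : 0 < 2 / α)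
  exact lhopital_atTop_of_tendsto_atTop hm' hG'
    (hderiv_pos.mono fun x ⟨hWx, hsum⟩ => by positivity) hGtop hratio

theorem tendsto_one_div_comp_sqrt_div_of_tendsto {α β : ℝ} {m : ℝ → ℝ}
    (h : Tendsto (fun x => m x /
      (2 / α * Real.log x ^ β * Real.exp (α * Real.log x ^ (1 - β) / (1 - β)))) atTop (𝓝 1)) :
    Tendsto (fun t => 1 / m (Real.sqrt t) / (α / 2 * Real.log (Real.sqrt t) ^ (-β) *
      Real.exp (-(α * Real.log (Real.sqrt t) ^ (1 - β) / (1 - β))))) atTop (𝓝 1) := by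
  have hinv := (h.comp Real.tendsto_sqrt_atTop).inv₀ one_ne_zero
  rw [inv_one] at hinv
  refine hinv.congr' ?_
  filter_upwards [eventually_ge_atTop 1] with t ht
  rw [div_mul_rpow_neg_mul_exp_neg (Real.log_nonneg (Real.one_le_sqrt.mpr ht)),
    Function.comp_apply, inv_div, div_inv_eq_mul, one_div_mul_eq_div]

/-- Example 2, case α > 0: with
W(x) = (1/x) exp(α (log x)^{1-β}/(1-β)) for x > 1 and m(x) = 2∫₁ˣ W + C,
m(x) ∼ (2/α)(log x)^β exp(α(log x)^{1-β}/(1-β)), hence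
1/m(√t) ∼ (α/2)(log √t)^{-β} exp(-α(log √t)^{1-β}/(1-β)). -/
theorem stmt12
    (α β C : ℝ) (hα : 0 < α) (hβ0 : 0 < β) (hβ1 : β < 1)
    (W : ℝ → ℝ)
    (hW : ∀ x > 1, W x =
      (1 / x) * Real.exp (α * Real.log x ^ (1 - β) / (1 - β)))
    (m : ℝ → ℝ)
    (hm : ∀ x, m x = 2 * (∫ u in (1:ℝ)..x, W u) + C) :
    Tendsto (fun x => m x /
        ((2 / α) * Real.log x ^ β *
          Real.exp (α * Real.log x ^ (1 - β) / (1 - β))))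
      atTop (nhds 1) ∧
    Tendsto (fun t => (1 / m (Real.sqrt t)) /
        ((α / 2) * Real.log (Real.sqrt t) ^ (-β) *
          Real.exp (-(α * Real.log (Real.sqrt t) ^ (1 - β) / (1 - β)))))
      atTop (nhds 1) := by
  have hfirst := tendsto_div_log_rpow_mul_exp_of_integral hα hβ0 hβ1 hW hm
  exact ⟨hfirst, tendsto_one_div_comp_sqrt_div_of_tendsto hfirst⟩
end
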